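/- Predicative embedding at the root: Let R be a TRS compatible with a POE* order ⊐ induced by precedence ≻, and let σ map variables to values. Then for every rule l → r ∈ R, Q(lσ) ▷_{|r|} Q(rσ), where Q is the predicative interpretation mapping a value to the empty sequence and a non-value f(s_1,...,s_k; s_{k+1},...,s_{k+l}) to the sequence [f^n(s_1,...,s_k)] ++ Q(s_{k+1}) ++ ... ++ Q(s_{k+l}), and |r| is the size of r. -/

import Mathlib

/-- Terms over signature `F` and variables `V`, with the argument positions of
each function symbol separated into normal (`nrm`) and safe (`saf`) ones. -/
inductive Tm (F V : Type) where
  | var : V → Tm F V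
  | app : F → List (Tm F V) → List (Tm F V) → Tm F V

namespace Tm

/-- Values: terms built from constructors (symbols in `C`) only; constructors
have only safe argument positions. -/
inductive IsVal {F V : Type} (C : Set F) : Tm F V → Prop where
  | app {f ss} : f ∈ C → (∀ t ∈ ss, IsVal C t) → IsVal C (Tm.app f [] ss)

/-- Constructor terms: terms built from constructors and variables only. -/
inductive IsConTm {F V : Type} (C : Set F) : Tm F V → Prop where
  | var (v : V) : IsConTm C (Tm.var v)
  | app {f ss} : f ∈ C → (∀ t ∈ ss, IsConTm C t) → IsConTm C (Tm.app f [] ss)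

/-- Application of a substitution to a term. -/
def subst {F V : Type} (σ : V → Tm F V) : Tm F V → Tm F V
  | Tm.var v => σ v
  | Tm.app f ns ss => Tm.app f (ns.attach.map fun t => subst σ t.1)
                               (ss.attach.map fun t => subst σ t.1)
  decreasing_by
    · have := List.sizeOf_lt_of_mem t.2; simp; omega
    · have := List.sizeOf_lt_of_mem t.2; simp; omega

/-- The size of a term: the number of symbols occurring in it. -/
def size {F V : Type} : Tm F V → ℕ
  | Tm.var _ => 1
  | Tm.app _ ns ss => 1 + ((ns.attach.map fun t => size t.1).sum
                            + (ss.attach.map fun t => size t.1).sum)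
  decreasing_by
    · have := List.sizeOf_lt_of_mem t.2; simp; omega
    · have := List.sizeOf_lt_of_mem t.2; simp; omega

/-- `SubEq s t` : `t` is a (not necessarily proper) subterm of `s`. -/
inductive SubEq {F V : Type} : Tm F V → Tm F V → Prop where
  | refl (t) : SubEq t t
  | nrm {f ns ss s t} : s ∈ ns → SubEq s t → SubEq (Tm.app f ns ss) t
  | saf {f ns ss s t} : s ∈ ss → SubEq s t → SubEq (Tm.app f ns ss) t

/-- `NSub s t` : `t` is a subterm of a normal argument of `s`
(the relation written `s ⊳ⁿ t`). -/
def NSub {F V : Type} (s t : Tm F V) : Prop :=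
  ∃ f ns ss, s = Tm.app f ns ss ∧ ∃ u ∈ ns, SubEq u t

/-- Call-by-value rewriting for a set of rules `R`: root steps instantiate a
rule with a substitution mapping variables to values, and rewriting is closed
under contexts. -/
inductive Rew {F V : Type} (C : Set F) (R : Set (Tm F V × Tm F V)) : Tm F V → Tm F V → Prop where
  | root {l r : Tm F V} (σ : V → Tm F V) :
      (l, r) ∈ R → (∀ v, IsVal C (σ v)) → Rew C R (subst σ l) (subst σ r)
  | ctxtN {s t f ns₁ ns₂ ss} : Rew C R s t →
      Rew C R (Tm.app f (ns₁ ++ s :: ns₂) ss) (Tm.app f (ns₁ ++ t :: ns₂) ss)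
  | ctxtS {s t f ns ss₁ ss₂} : Rew C R s t →
      Rew C R (Tm.app f ns (ss₁ ++ s :: ss₂)) (Tm.app f ns (ss₁ ++ t :: ss₂))

mutual
  /-- The POE* order `⊐` induced by a precedence `prec` and constructors `C`
  (Definition of `poe`); symbols not in `C` are the defined symbols. -/
  inductive Poe {F V : Type} (prec : F → F → Prop) (C : Set F) : Tm F V → Tm F V → Prop where
    /- clause (1), `sᵢ = t`: `t` is one of the (normal or safe) arguments -/
    | sub {f ns ss t} : t ∈ ns ++ ss → Poe prec C (Tm.app f ns ss) t
    /- clause (1), `sᵢ ⊐ t` for an argument `sᵢ` -/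
    | subtrans {f ns ss u t} : u ∈ ns ++ ss → Poe prec C u t → Poe prec C (Tm.app f ns ss) t
    /- clause (2): precedence descent; normal arguments of `t` are subterms of
       normal arguments of `s`, and `s ⊐` every safe argument of `t` -/
    | ia {f g : F} {ns ss tn ts} : f ∉ C → prec f g →
        (∀ t' ∈ tn, NSub (Tm.app f ns ss) t') →
        (∀ t' ∈ ts, Poe prec C (Tm.app f ns ss) t') →
        Poe prec C (Tm.app f ns ss) (Tm.app g tn ts)
    /- clause (3): same defined root symbol, product descent on normal
       arguments, `s ⊐` every safe argument of `t` -/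
    | tsc {f : F} {ns ss tn ts} : f ∉ C →
        PoeProd prec C ns tn →
        (∀ t' ∈ ts, Poe prec C (Tm.app f ns ss) t') →
        Poe prec C (Tm.app f ns ss) (Tm.app f tn ts)

  /-- Product extension of `⊐`: componentwise equal-or-smaller with at least
  one strict decrease. -/
  inductive PoeProd {F V : Type} (prec : F → F → Prop) (C : Set F) :
      List (Tm F V) → List (Tm F V) → Prop where
    | strict {a b as bs} : Poe prec C a b → PoeGE prec C as bs →
        PoeProd prec C (a :: as) (b :: bs)
    | cons_eq {a as bs} : PoeProd prec C as bs → PoeProd prec C (a :: as) (a :: bs)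
    | cons_lt {a b as bs} : Poe prec C a b → PoeProd prec C as bs →
        PoeProd prec C (a :: as) (b :: bs)

  /-- Componentwise equal-or-smaller (w.r.t. `⊐`) lists of equal length. -/
  inductive PoeGE {F V : Type} (prec : F → F → Prop) (C : Set F) :
      List (Tm F V) → List (Tm F V) → Prop where
    | nil : PoeGE prec C [] []
    | cons_eq {a as bs} : PoeGE prec C as bs → PoeGE prec C (a :: as) (a :: bs)
    | cons_lt {a b as bs} : Poe prec C a b → PoeGE prec C as bs →
        PoeGE prec C (a :: as) (b :: bs)
end

/-- `R` is compatible with the POE* order induced by `prec`, and is a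
constructor TRS: every left-hand side has a defined root symbol and its
arguments are constructor terms. -/
def PoeCompatible {F V : Type} (prec : F → F → Prop) (C : Set F)
    (R : Set (Tm F V × Tm F V)) : Prop :=
  ∀ p ∈ R, Poe prec C p.1 p.2 ∧
    ∃ f ns ss, p.1 = Tm.app f ns ss ∧ f ∉ C ∧ ∀ t ∈ ns ++ ss, IsConTm C t

/-- `TN`: the set of terms whose normal argument positions hold values. -/
inductive TN {F V : Type} (C : Set F) : Tm F V → Prop where
  | val {t} : IsVal C t → TN C t
  | app {f ns ss} : (∀ v ∈ ns, IsVal C v) → (∀ t ∈ ss, TN C t) →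
      TN C (Tm.app f ns ss)

end Tm

namespace Tm

/-- `SSub s t` : `t` is a strict subterm of `s`. -/
inductive SSub {F V : Type} : Tm F V → Tm F V → Prop where
  | nrm {f ns ss u t} : u ∈ ns → SubEq u t → SSub (Tm.app f ns ss) t
  | saf {f ns ss u t} : u ∈ ss → SubEq u t → SSub (Tm.app f ns ss) t

/-- Elements compared by the auxiliary order `▷_ℓ`: normalised terms (inl) or
sequences of normalised terms (inr).  The normalised term `fⁿ(s₁,…,s_k)` is
represented as `f` applied to normal arguments `s₁,…,s_k` and no safe
arguments; the lifted precedence `fⁿ ≻' gⁿ ⇔ f ≻ g` is then `prec` itself. -/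
abbrev TS (F V : Type) := Tm F V ⊕ List (Tm F V)

/-- Identification of a term with the singleton sequence. -/
def toL {F V : Type} : TS F V → List (Tm F V) := Sum.elim (fun t => [t]) id

mutual
  /-- The auxiliary order `▷_ℓ` on (normalised) terms and sequences, induced
  by a precedence `prec` and the width bound `ℓ`. -/
  inductive Poel {F V : Type} (prec : F → F → Prop) (ℓ : ℕ) : TS F V → TS F V → Prop where
    /- clause (1): precedence descent to strict subterms, width at most ℓ -/
    | ia {f g : F} {ss ts : List (Tm F V)} :
        prec f g → (∀ t ∈ ts, SSub (Tm.app f ss []) t) → ts.length ≤ ℓ →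
        Poel prec ℓ (Sum.inl (Tm.app f ss [])) (Sum.inl (Tm.app g ts []))
    /- clause (2): same symbol, product extension of the strict-subterm order -/
    | tsc {f : F} {ss ts : List (Tm F V)} :
        List.Forall₂ (fun s t => s = t ∨ SSub s t) ss ts →
        (∃ i, ∃ (h₁ : i < ss.length) (h₂ : i < ts.length), SSub ss[i] ts[i]) →
        Poel prec ℓ (Sum.inl (Tm.app f ss [])) (Sum.inl (Tm.app f ts []))
    /- clause (3): descent from a term to a sequence of at most ℓ smaller terms -/
    | ialst {f : F} {ss ts : List (Tm F V)} :
        (∀ t ∈ ts, Poel prec ℓ (Sum.inl (Tm.app f ss [])) (Sum.inl t)) → ts.length ≤ ℓ →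
        Poel prec ℓ (Sum.inl (Tm.app f ss [])) (Sum.inr ts)
    /- clause (4): sequences, splitting `ts = b₁ ++ ⋯ ++ b_k` with
       `⟨s₁,…,s_k⟩` greater than `⟨b₁,…,b_k⟩` in the product extension of `▷_ℓ` -/
    | ms {ss ts : List (Tm F V)} (bs : List (TS F V)) :
        ts = (bs.map toL).flatten →
        PoelProd prec ℓ (ss.map Sum.inl) bs →
        Poel prec ℓ (Sum.inr ss) (Sum.inr ts)

  /-- Product extension of `▷_ℓ`: componentwise equal-or-smaller with at
  least one strict decrease. -/
  inductive PoelProd {F V : Type} (prec : F → F → Prop) (ℓ : ℕ) :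
      List (TS F V) → List (TS F V) → Prop where
    | strict {a b as bs} : Poel prec ℓ a b → PoelGE prec ℓ as bs →
        PoelProd prec ℓ (a :: as) (b :: bs)
    | cons_eq {a as bs} : PoelProd prec ℓ as bs → PoelProd prec ℓ (a :: as) (a :: bs)
    | cons_lt {a b as bs} : Poel prec ℓ a b → PoelProd prec ℓ as bs →
        PoelProd prec ℓ (a :: as) (b :: bs)

  /-- Componentwise equal-or-smaller (w.r.t. `▷_ℓ`) lists of equal length. -/
  inductive PoelGE {F V : Type} (prec : F → F → Prop) (ℓ : ℕ) :
      List (TS F V) → List (TS F V) → Prop where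
    | nil : PoelGE prec ℓ [] []
    | cons_eq {a as bs} : PoelGE prec ℓ as bs → PoelGE prec ℓ (a :: as) (a :: bs)
    | cons_lt {a b as bs} : Poel prec ℓ a b → PoelGE prec ℓ as bs →
        PoelGE prec ℓ (a :: as) (b :: bs)
end

mutual
  /-- The predicative interpretation `Q` (as a functional relation):
  a value is mapped to the empty sequence, and a non-value
  `f(s₁,…,s_k; s_{k+1},…,s_{k+l})` to `[fⁿ(s₁,…,s_k)] ++ Q(s_{k+1}) ++ ⋯ ++ Q(s_{k+l})`. -/
  inductive QRel {F V : Type} (C : Set F) : Tm F V → List (Tm F V) → Prop where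
    | val {t} : IsVal C t → QRel C t []
    | app {f ns ss qs} : ¬ IsVal C (Tm.app f ns ss) → QList C ss qs →
        QRel C (Tm.app f ns ss) (Tm.app f ns [] :: qs.flatten)

  /-- `Q` applied pointwise to a list of terms. -/
  inductive QList {F V : Type} (C : Set F) : List (Tm F V) → List (List (Tm F V)) → Prop where
    | nil : QList C [] []
    | cons {t q ts qs} : QRel C t q → QList C ts qs → QList C (t :: ts) (q :: qs)
end

end Tm

/-!
The safe arguments of `lσ` are values, so `Q(lσ)` is the single normalised term
`fⁿ(l₁σ,…,l_kσ)`, and clause (4) of `▷_ℓ` reduces the claim to two facts: `Q(rσ)` has at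
most `|r|` elements, and `fⁿ(l₁σ,…,l_kσ)` dominates each of them. An element of `Q(rσ)`
is the normalised head `gⁿ(t⃗σ)` of a subterm `g(t⃗; u⃗)` of `r` reached through safe
positions only, and `l ⊐ g(t⃗; u⃗)` by clause (2) or (3), never (1), since
`g(t⃗; u⃗)σ` is not a value. Clause (2) of `⊐` then turns into clause (1) of `▷`, and
clause (3) into clause (2) because a constructor term is `⊐`-greater only than its
subterms, which remain strict subterms under `σ`.
-/

theorem List.Forall₂.exists_of_mem_right {α β : Type*} {R : α → β → Prop} {l₁ : List α}
    {l₂ : List β} (h : List.Forall₂ R l₁ l₂) {b : β} (hb : b ∈ l₂) : ∃ a ∈ l₁, R a b := by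
  induction h with
  | nil => cases hb
  | cons hab _ ih =>
    rcases List.mem_cons.1 hb with rfl | hb
    · exact ⟨_, List.mem_cons_self, hab⟩
    · obtain ⟨a, ha, h⟩ := ih hb
      exact ⟨a, List.mem_cons_of_mem _ ha, h⟩

namespace Tm

variable {F V : Type} {C : Set F} {prec : F → F → Prop} {σ : V → Tm F V}

theorem subst_app (σ : V → Tm F V) (f : F) (ns ss : List (Tm F V)) :
    subst σ (Tm.app f ns ss) = Tm.app f (ns.map (subst σ)) (ss.map (subst σ)) := by
  rw [subst]; simp

theorem size_app (f : F) (ns ss : List (Tm F V)) :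
    size (Tm.app f ns ss) = 1 + ((ns.map size).sum + (ss.map size).sum) := by
  rw [size]; simp

theorem one_le_size (t : Tm F V) : 1 ≤ size t := by
  cases t with
  | var => rw [size]
  | app => rw [size_app]; omega

theorem length_le_size_app (f : F) (ns ss : List (Tm F V)) :
    ns.length ≤ size (Tm.app f ns ss) := by
  have := List.length_le_sum_of_one_le (ns.map size) (by simp [one_le_size])
  rw [size_app]; simp only [List.length_map] at this; omega

theorem size_lt_of_mem_safe {f : F} {ns ss : List (Tm F V)} {t : Tm F V} (ht : t ∈ ss) :
    size t < size (Tm.app f ns ss) := by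
  have := List.le_sum_of_mem (List.mem_map_of_mem (f := size) ht)
  rw [size_app]; omega

theorem SubEq.subst (σ : V → Tm F V) {u t : Tm F V} (h : SubEq u t) :
    SubEq (Tm.subst σ u) (Tm.subst σ t) := by
  induction h with
  | refl t => exact .refl _
  | nrm hmem _ ih => rw [subst_app]; exact .nrm (List.mem_map_of_mem hmem) ih
  | saf hmem _ ih => rw [subst_app]; exact .saf (List.mem_map_of_mem hmem) ih

theorem SSub.subst (σ : V → Tm F V) {u t : Tm F V} :
    SSub u t → SSub (Tm.subst σ u) (Tm.subst σ t)
  | .nrm hmem h => by rw [subst_app]; exact .nrm (List.mem_map_of_mem hmem) (h.subst σ)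
  | .saf hmem h => by rw [subst_app]; exact .saf (List.mem_map_of_mem hmem) (h.subst σ)

theorem SSub.subEq {u t : Tm F V} : SSub u t → SubEq u t
  | .nrm hmem h => .nrm hmem h
  | .saf hmem h => .saf hmem h

theorem NSub.ssub_subst (σ : V → Tm F V) {f : F} {ns ss : List (Tm F V)} {t : Tm F V}
    (h : NSub (Tm.app f ns ss) t) :
    SSub (Tm.app f (ns.map (subst σ)) []) (subst σ t) := by
  obtain ⟨_, _, _, heq, u, hu, hsub⟩ := h
  cases heq
  exact .nrm (List.mem_map_of_mem hu) (hsub.subst σ)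

theorem IsConTm.isVal_subst (hσ : ∀ v, IsVal C (σ v)) {t : Tm F V} (h : IsConTm C t) :
    IsVal C (subst σ t) := by
  induction h with
  | var v => rw [subst]; exact hσ v
  | app hf _ ih =>
    rw [subst_app]
    exact .app hf fun _ hx => by
      obtain ⟨u, hu, rfl⟩ := List.mem_map.mp hx
      exact ih u hu

theorem IsConTm.of_subEq {u t : Tm F V} (h : SubEq u t) (hu : IsConTm C u) : IsConTm C t := by
  induction h with
  | refl => exact hu
  | nrm hmem => cases hu; simp at hmem
  | saf hmem _ ih => cases hu with | app _ hargs => exact ih (hargs _ hmem)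

/-- Clauses (2) and (3) of `⊐` need a defined root symbol. -/
theorem IsConTm.ssub_of_poe {u t : Tm F V} (hu : IsConTm C u) (h : Poe prec C u t) :
    SSub u t := by
  induction hu generalizing t with
  | var v => cases h
  | app hf _ ih =>
    cases h with
    | sub hmem => exact .saf (by simpa using hmem) (.refl _)
    | subtrans hmem h' =>
      simp only [List.nil_append] at hmem
      exact .saf hmem (ih _ hmem h').subEq
    | ia hf' => exact absurd hf hf'
    | tsc hf' => exact absurd hf hf'

theorem IsConTm.of_poe {u t : Tm F V} (hu : IsConTm C u) (h : Poe prec C u t) : IsConTm C t :=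
  hu.of_subEq (hu.ssub_of_poe h).subEq

theorem PoeGE.forall₂ : ∀ {as bs : List (Tm F V)}, PoeGE prec C as bs →
    List.Forall₂ (fun a b => a = b ∨ Poe prec C a b) as bs
  | _, _, .nil => .nil
  | _, _, .cons_eq h => .cons (.inl rfl) h.forall₂
  | _, _, .cons_lt hab h => .cons (.inr hab) h.forall₂

theorem PoeProd.forall₂_and_exists : ∀ {as bs : List (Tm F V)}, PoeProd prec C as bs →
    List.Forall₂ (fun a b => a = b ∨ Poe prec C a b) as bs ∧
      ∃ i, ∃ (h₁ : i < as.length) (h₂ : i < bs.length), Poe prec C as[i] bs[i]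
  | _, _, .strict hab h => ⟨.cons (.inr hab) h.forall₂, 0, by simp, by simp, hab⟩
  | _, _, .cons_eq h =>
    have ⟨hall, i, h₁, h₂, hi⟩ := h.forall₂_and_exists
    ⟨.cons (.inl rfl) hall, i + 1, by simpa, by simpa, hi⟩
  | _, _, .cons_lt hab h =>
    have ⟨hall, i, h₁, h₂, hi⟩ := h.forall₂_and_exists
    ⟨.cons (.inr hab) hall, i + 1, by simpa, by simpa, hi⟩

theorem Poel.app_of_poeProd {ℓ : ℕ} (σ : V → Tm F V) {f : F} {ns tn : List (Tm F V)}
    (hcon : ∀ u ∈ ns, IsConTm C u) (h : PoeProd prec C ns tn) :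
    Poel prec ℓ (Sum.inl (Tm.app f (ns.map (subst σ)) []))
      (Sum.inl (Tm.app f (tn.map (subst σ)) [])) := by
  obtain ⟨hall, i, h₁, h₂, hi⟩ := h.forall₂_and_exists
  refine .tsc ?_ ⟨i, by simpa, by simpa, ?_⟩
  · rw [List.forall₂_map_left_iff, List.forall₂_map_right_iff]
    exact ((List.forall₂_and_left _ _).2 ⟨hcon, hall⟩).imp fun a b ⟨ha, hab⟩ =>
      hab.imp (congrArg _) fun h => (ha.ssub_of_poe h).subst σ
  · simpa using ((hcon _ (List.getElem_mem h₁)).ssub_of_poe hi).subst σ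

theorem Poel.mono {ℓ ℓ' : ℕ} (hl : ℓ ≤ ℓ') {a b : Tm F V}
    (h : Poel prec ℓ (Sum.inl a) (Sum.inl b)) : Poel prec ℓ' (Sum.inl a) (Sum.inl b) := by
  cases h with
  | ia hp hs hlen => exact .ia hp hs (hlen.trans hl)
  | tsc hall hex => exact .tsc hall hex

theorem QRel.eq_nil_of_isVal {t : Tm F V} {q : List (Tm F V)} (hv : IsVal C t)
    (hq : QRel C t q) : q = [] := by
  cases hq with
  | val _ => rfl
  | app hnv _ => exact absurd hv hnv

theorem QList.forall₂ :
    ∀ {ts : List (Tm F V)} {qs}, QList C ts qs → List.Forall₂ (QRel C) ts qs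
  | _, _, .nil => .nil
  | _, _, .cons h hs => .cons h hs.forall₂

theorem QRel.length_le_size (hσ : ∀ v, IsVal C (σ v)) :
    ∀ {t : Tm F V} {q}, QRel C (subst σ t) q → q.length ≤ size t
  | .var v, _, hq => by rw [subst] at hq; simp [hq.eq_nil_of_isVal (hσ v), size]
  | .app g tn ts, _, hq => by
    rw [subst_app] at hq
    rcases hq with _ | @⟨_, _, _, qs, _, hqs⟩
    · simp
    have hlen : (qs.map List.length).sum ≤ (ts.map size).sum := by
      refine List.Forall₂.sum_le_sum ?_
      rw [List.forall₂_map_left_iff, List.forall₂_map_right_iff]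
      have hrel := List.forall₂_map_left_iff.1 hqs.forall₂
      refine List.Forall₂.flip <|
        ((List.forall₂_and_left _ _).2 ⟨fun _ h => h, hrel⟩).imp fun t q ⟨ht, h⟩ => ?_
      exact length_le_size hσ h
    rw [size_app, List.length_cons, List.length_flatten]
    omega

theorem QRel.exists_of_mem_subst (hσ : ∀ v, IsVal C (σ v)) {t : Tm F V} {q : List (Tm F V)}
    (hq : QRel C (subst σ t) q) {x : Tm F V} (hx : x ∈ q) :
    ∃ g tn ts, t = Tm.app g tn ts ∧ ¬ IsVal C (subst σ t) ∧
      (x = Tm.app g (tn.map (subst σ)) [] ∨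
        ∃ t' ∈ ts, ∃ q', QRel C (subst σ t') q' ∧ x ∈ q') := by
  rcases t with v | ⟨g, tn, ts⟩
  · rw [subst] at hq
    simp [hq.eq_nil_of_isVal (hσ v)] at hx
  rw [subst_app] at hq ⊢
  rcases hq with _ | ⟨hnv, hqs⟩
  · simp at hx
  refine ⟨g, tn, ts, rfl, hnv, ?_⟩
  rcases List.mem_cons.1 hx with rfl | hx
  · exact .inl rfl
  obtain ⟨q', hq', hxq'⟩ := List.mem_flatten.1 hx
  obtain ⟨_, hmem, hrel⟩ := hqs.forall₂.exists_of_mem_right hq'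
  obtain ⟨t', ht', rfl⟩ := List.mem_map.1 hmem
  exact .inr ⟨t', ht', q', hrel, hxq'⟩

theorem QRel.eq_singleton_of_forall_isVal {f : F} {ns ss : List (Tm F V)} {q : List (Tm F V)}
    (hf : f ∉ C) (hss : ∀ s ∈ ss, IsVal C s) (hq : QRel C (Tm.app f ns ss) q) :
    q = [Tm.app f ns []] := by
  rcases hq with hv | ⟨_, hqs⟩
  · cases hv; contradiction
  rw [List.flatten_eq_nil_iff.2 fun q' hq' => ?_]
  obtain ⟨s, hs, hrel⟩ := hqs.forall₂.exists_of_mem_right hq'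
  exact hrel.eq_nil_of_isVal (hss s hs)

theorem Poe.poel_normal_and_safe_args (hσ : ∀ v, IsVal C (σ v)) {f g : F}
    {ns ss tn ts : List (Tm F V)} (hcon : ∀ u ∈ ns ++ ss, IsConTm C u)
    (h : Poe prec C (Tm.app f ns ss) (Tm.app g tn ts))
    (hnv : ¬ IsVal C (subst σ (Tm.app g tn ts))) :
    Poel prec (size (Tm.app g tn ts)) (Sum.inl (Tm.app f (ns.map (subst σ)) []))
        (Sum.inl (Tm.app g (tn.map (subst σ)) [])) ∧
      ∀ t ∈ ts, Poe prec C (Tm.app f ns ss) t := by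
  cases h with
  | sub hmem => exact absurd ((hcon _ hmem).isVal_subst hσ) hnv
  | subtrans hmem h => exact absurd (((hcon _ hmem).of_poe h).isVal_subst hσ) hnv
  | ia _ hpk hn hsafe =>
    refine ⟨.ia hpk (fun t ht => ?_) (by simpa using length_le_size_app g tn ts), hsafe⟩
    obtain ⟨u, hu, rfl⟩ := List.mem_map.1 ht
    exact (hn u hu).ssub_subst σ
  | tsc _ hprod hsafe =>
    exact ⟨.app_of_poeProd σ (fun u hu => hcon u (List.mem_append_left _ hu)) hprod, hsafe⟩

theorem Poe.poel_of_mem_qRel (hσ : ∀ v, IsVal C (σ v)) {f : F} {ns ss : List (Tm F V)}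
    (hcon : ∀ u ∈ ns ++ ss, IsConTm C u) :
    ∀ {t : Tm F V} {q}, Poe prec C (Tm.app f ns ss) t → QRel C (subst σ t) q →
      ∀ x ∈ q, Poel prec (size t) (Sum.inl (Tm.app f (ns.map (subst σ)) [])) (Sum.inl x)
  | _, _, hpoe, hq, x, hx => by
    obtain ⟨g, tn, ts, rfl, hnv, hx⟩ := hq.exists_of_mem_subst hσ hx
    obtain ⟨hhead, hsafe⟩ := hpoe.poel_normal_and_safe_args hσ hcon hnv
    rcases hx with rfl | ⟨t, ht, q, hq, hx⟩
    · exact hhead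
    · exact (poel_of_mem_qRel hσ hcon (hsafe t ht) hq x hx).mono (size_lt_of_mem_safe ht).le

end Tm

open Tm in
/-- Predicative embedding at the root: for a TRS `R` compatible with the POE*
order induced by `prec` and a substitution `σ` mapping variables to values,
every rule `l → r ∈ R` satisfies `Q(lσ) ▷_{|r|} Q(rσ)`. -/
theorem predicative_embedding_root {F V : Type} (C : Set F) (prec : F → F → Prop)
    (R : Set (Tm F V × Tm F V)) (hcompat : PoeCompatible prec C R)
    (σ : V → Tm F V) (hσ : ∀ v, IsVal C (σ v))
    {l r : Tm F V} (hrule : (l, r) ∈ R)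
    {ql qr : List (Tm F V)}
    (hql : QRel C (subst σ l) ql) (hqr : QRel C (subst σ r) qr) :
    Poel prec (size r) (Sum.inr ql) (Sum.inr qr) := by
  obtain ⟨hpoe, f, ns, ss, rfl, hf, hcon⟩ := hcompat (l, r) hrule
  rw [subst_app] at hql
  obtain rfl := hql.eq_singleton_of_forall_isVal hf fun s hs => by
    obtain ⟨u, hu, rfl⟩ := List.mem_map.1 hs
    exact (hcon u (List.mem_append_right _ hu)).isVal_subst hσ
  exact .ms [.inr qr] (by simp [toL])
    (.strict (.ialst (hpoe.poel_of_mem_qRel hσ hcon hqr) (hqr.length_le_size hσ)) .nil)
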